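/- arXiv:2403.05226 — 2 statements merged into one kernel-verified Lean document; each statement's English description precedes it below -/
import Mathlib

section
/- Let n, m be positive integers and let T(n,m) be the set of quadruples (t1,t2,t3,t4) of nonnegative integers with t1+t2+t3+t4 = n and t1+2*t2+3*t3+4*t4 = 2*m. If (t1,t2,t3,t4) is in T(n,m) and t2+t3 <= 1, then: t1 = floor((4n-2m)/3); t2 = 1 if 2m-n ≡ 1 (mod 3) and t2 = 0 otherwise; t3 = 1 if 2m-n ≡ 2 (mod 3) and t3 = 0 otherwise; and t4 = floor((2m-n)/3). -/
theorem stmt_9 (n m : ℕ) (hn : 0 < n) (hm : 0 < m)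
    (t1 t2 t3 t4 : ℕ)
    (hsum : t1 + t2 + t3 + t4 = n)
    (hdeg : t1 + 2 * t2 + 3 * t3 + 4 * t4 = 2 * m)
    (h23 : t2 + t3 ≤ 1) :
    t1 = (4 * n - 2 * m) / 3 ∧
      t2 = (if (2 * m - n) % 3 = 1 then 1 else 0) ∧
      t3 = (if (2 * m - n) % 3 = 2 then 1 else 0) ∧
      t4 = (2 * m - n) / 3 := by
  refine ⟨?_, ?_, ?_, ?_⟩ <;> (try split_ifs) <;> omega
end

section
/- Let n, m be positive integers and let T(n,m) be the set of quadruples (t1,t2,t3,t4) of nonnegative integers with t1+t2+t3+t4 = n and t1+2*t2+3*t3+4*t4 = 2*m. Define f(t1,t2,t3,t4) = (3/4)*t1 + (3/sqrt(2) - 1)*t2 + (21/(4*sqrt(3)) - 3/2)*t3 + 2*t4. If (t1,t2,t3,t4) in T(n,m) has t2+t3 > 1, then there exists (s1,s2,s3,s4) in T(n,m) with s2+s3 <= 1 and f(s1,s2,s3,s4) > f(t1,t2,t3,t4). -/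
noncomputable def agProfile (t1 t2 t3 t4 : ℝ) : ℝ :=
  (3 / 4) * t1 + (3 / Real.sqrt 2 - 1) * t2 + (21 / (4 * Real.sqrt 3) - 3 / 2) * t3 + 2 * t4

lemma sqrt2_gt : (1.41421 : ℝ) < Real.sqrt 2 := by
  nlinarith [Real.sq_sqrt (show (0:ℝ) ≤ 2 by norm_num), Real.sqrt_nonneg 2]

lemma sqrt2_lt : Real.sqrt 2 < (1.41422 : ℝ) := by
  nlinarith [Real.sq_sqrt (show (0:ℝ) ≤ 2 by norm_num), Real.sqrt_nonneg 2]

lemma sqrt3_gt : (1.73205 : ℝ) < Real.sqrt 3 := by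
  nlinarith [Real.sq_sqrt (show (0:ℝ) ≤ 3 by norm_num), Real.sqrt_nonneg 3]

lemma sqrt3_lt : Real.sqrt 3 < (1.7320509 : ℝ) := by
  nlinarith [Real.sq_sqrt (show (0:ℝ) ≤ 3 by norm_num), Real.sqrt_nonneg 3]

lemma div2_eq : (3 : ℝ) / Real.sqrt 2 = 3 * Real.sqrt 2 / 2 := by
  rw [div_eq_div_iff (by positivity) (by norm_num)]
  nlinarith [Real.sq_sqrt (show (0:ℝ) ≤ 2 by norm_num)]

lemma div3_eq : (21 : ℝ) / (4 * Real.sqrt 3) = 7 * Real.sqrt 3 / 4 := by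
  rw [div_eq_div_iff (by positivity) (by norm_num)]
  nlinarith [Real.sq_sqrt (show (0:ℝ) ≤ 3 by norm_num)]

lemma ineq1 : 2 * (3 / Real.sqrt 2 - 1) < 3 / 4 + (21 / (4 * Real.sqrt 3) - 3 / 2) := by
  rw [div2_eq, div3_eq]
  nlinarith [sqrt2_lt, sqrt3_gt]

lemma ineq2 : 2 * (21 / (4 * Real.sqrt 3) - 3 / 2) < (3 / Real.sqrt 2 - 1) + 2 := by
  rw [div2_eq, div3_eq]
  nlinarith [sqrt2_gt, sqrt3_lt]

lemma ineq3 : (3 / Real.sqrt 2 - 1) + (21 / (4 * Real.sqrt 3) - 3 / 2) < 3 / 4 + 2 := by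
  rw [div2_eq, div3_eq]
  nlinarith [sqrt2_lt, sqrt3_lt]

lemma aux (k : ℕ) : ∀ t1 t2 t3 t4 : ℕ, t2 + t3 = k → 1 < t2 + t3 →
    ∃ s1 s2 s3 s4 : ℕ,
      s1 + s2 + s3 + s4 = t1 + t2 + t3 + t4 ∧
      s1 + 2 * s2 + 3 * s3 + 4 * s4 = t1 + 2 * t2 + 3 * t3 + 4 * t4 ∧
      s2 + s3 ≤ 1 ∧
      agProfile s1 s2 s3 s4 > agProfile t1 t2 t3 t4 := by
  induction k using Nat.strong_induction_on with
  | _ k ih =>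
    intro t1 t2 t3 t4 hk h23
    by_cases h2 : 2 ≤ t2
    · -- move: two deg-2 vertices → deg-1 + deg-3
      obtain ⟨u, rfl⟩ : ∃ u, t2 = u + 2 := ⟨t2 - 2, by omega⟩
      have hstep : agProfile ((t1 + 1 : ℕ) : ℝ) ((u : ℕ) : ℝ) ((t3 + 1 : ℕ) : ℝ) ((t4 : ℕ) : ℝ) > agProfile ((t1 : ℕ) : ℝ) ((u + 2 : ℕ) : ℝ) ((t3 : ℕ) : ℝ) ((t4 : ℕ) : ℝ) := by
        unfold agProfile
        push_cast
        have := ineq1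
        nlinarith [ineq1]
      by_cases hle : u + (t3 + 1) ≤ 1
      · exact ⟨t1 + 1, u, t3 + 1, t4, by omega, by omega, hle, hstep⟩
      · obtain ⟨s1, s2, s3, s4, e1, e2, e3, e4⟩ :=
          ih (u + (t3 + 1)) (by omega) (t1 + 1) u (t3 + 1) t4 rfl (by omega)
        exact ⟨s1, s2, s3, s4, by omega, by omega, e3, lt_trans hstep e4⟩
    · by_cases h3 : 2 ≤ t3
      · -- move: two deg-3 vertices → deg-2 + deg-4
        obtain ⟨u, rfl⟩ : ∃ u, t3 = u + 2 := ⟨t3 - 2, by omega⟩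
        have hstep : agProfile ((t1 : ℕ) : ℝ) ((t2 + 1 : ℕ) : ℝ) ((u : ℕ) : ℝ) ((t4 + 1 : ℕ) : ℝ) > agProfile ((t1 : ℕ) : ℝ) ((t2 : ℕ) : ℝ) ((u + 2 : ℕ) : ℝ) ((t4 : ℕ) : ℝ) := by
          unfold agProfile
          push_cast
          nlinarith [ineq2]
        by_cases hle : (t2 + 1) + u ≤ 1
        · exact ⟨t1, t2 + 1, u, t4 + 1, by omega, by omega, hle, hstep⟩
        · obtain ⟨s1, s2, s3, s4, e1, e2, e3, e4⟩ :=
            ih ((t2 + 1) + u) (by omega) t1 (t2 + 1) u (t4 + 1) rfl (by omega)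
          exact ⟨s1, s2, s3, s4, by omega, by omega, e3, lt_trans hstep e4⟩
      · -- t2 = 1, t3 = 1 : move deg-2 + deg-3 → deg-1 + deg-4
        have ht2 : t2 = 1 := by omega
        have ht3 : t3 = 1 := by omega
        subst ht2 ht3
        refine ⟨t1 + 1, 0, 0, t4 + 1, by omega, by omega, by omega, ?_⟩
        unfold agProfile
        push_cast
        nlinarith [ineq3]

theorem stmt_14 (n m : ℕ) (hn : 0 < n) (hm : 0 < m)
    (t1 t2 t3 t4 : ℕ)
    (hsum : t1 + t2 + t3 + t4 = n)
    (hdeg : t1 + 2 * t2 + 3 * t3 + 4 * t4 = 2 * m)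
    (h23 : 1 < t2 + t3) :
    ∃ s1 s2 s3 s4 : ℕ,
      s1 + s2 + s3 + s4 = n ∧
      s1 + 2 * s2 + 3 * s3 + 4 * s4 = 2 * m ∧
      s2 + s3 ≤ 1 ∧
      agProfile s1 s2 s3 s4 > agProfile t1 t2 t3 t4 := by
  obtain ⟨s1, s2, s3, s4, e1, e2, e3, e4⟩ :=
    aux (t2 + t3) t1 t2 t3 t4 rfl h23
  exact ⟨s1, s2, s3, s4, by omega, by omega, e3, e4⟩
end
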